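/- arXiv:1510.06190 — 2 statements merged into one kernel-verified Lean document; each statement's English description precedes it below -/
import Mathlib

section
/- The curve X^5 + Y^5 + X Z^4 + β X^3 Z^2 = 0 (with β ∈ K) is nonsingular if and only if β ≠ 2 and β ≠ -2; more precisely, the polynomial F = X^5 + Y^5 + X Z^4 + β X^3 Z^2 has a nontrivial common zero of its partial derivatives in K^3 if and only if β^2 = 4. -/
open MvPolynomial

/-- X^5 + Y^5 + X Z^4 + β X^3 Z^2 is nonsingular iff β ≠ ±2; more precisely the
partial derivatives have a nontrivial common zero iff β^2 = 4. -/
theorem quintic_type10_singular_iff {K : Type*} [Field K] [IsAlgClosed K] [CharZero K]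
    (β : K) (F : MvPolynomial (Fin 3) K)
    (hF : F = X 0 ^ 5 + X 1 ^ 5 + X 0 * X 2 ^ 4 + C β * X 0 ^ 3 * X 2 ^ 2) :
    ((¬ ∃ p : Fin 3 → K, p ≠ 0 ∧ ∀ i : Fin 3, eval p (pderiv i F) = 0) ↔ (β ≠ 2 ∧ β ≠ -2)) ∧
    ((∃ p : Fin 3 → K, p ≠ 0 ∧ ∀ i : Fin 3, eval p (pderiv i F) = 0) ↔ β ^ 2 = 4) := by
  subst hF
  have h0 : ∀ p : Fin 3 → K,
      eval p (pderiv 0 (X 0 ^ 5 + X 1 ^ 5 + X 0 * X 2 ^ 4 + C β * X 0 ^ 3 * X 2 ^ 2 : MvPolynomial (Fin 3) K))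
      = 5 * p 0 ^ 4 + p 2 ^ 4 + 3 * β * p 0 ^ 2 * p 2 ^ 2 := by
    intro p; simp [pderiv_X]; ring
  have h1 : ∀ p : Fin 3 → K,
      eval p (pderiv 1 (X 0 ^ 5 + X 1 ^ 5 + X 0 * X 2 ^ 4 + C β * X 0 ^ 3 * X 2 ^ 2 : MvPolynomial (Fin 3) K))
      = 5 * p 1 ^ 4 := by
    intro p; simp [pderiv_X]
  have h2 : ∀ p : Fin 3 → K,
      eval p (pderiv 2 (X 0 ^ 5 + X 1 ^ 5 + X 0 * X 2 ^ 4 + C β * X 0 ^ 3 * X 2 ^ 2 : MvPolynomial (Fin 3) K))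
      = 4 * p 0 * p 2 ^ 3 + 2 * β * p 0 ^ 3 * p 2 := by
    intro p; simp [pderiv_X]; ring
  have key : (∃ p : Fin 3 → K, p ≠ 0 ∧ ∀ i : Fin 3,
      eval p (pderiv i (X 0 ^ 5 + X 1 ^ 5 + X 0 * X 2 ^ 4 + C β * X 0 ^ 3 * X 2 ^ 2 : MvPolynomial (Fin 3) K)) = 0)
      ↔ β ^ 2 = 4 := by
    constructor
    · rintro ⟨p, hp, h⟩
      have e0 := (h0 p).symm.trans (h 0)
      have e1 := (h1 p).symm.trans (h 1)
      have e2 := (h2 p).symm.trans (h 2)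
      have hp1 : p 1 = 0 := by
        have : p 1 ^ 4 = 0 := by linear_combination e1 / 5
        exact pow_eq_zero_iff (by norm_num) |>.mp this
      have hx : p 0 ≠ 0 := by
        intro hx
        apply hp
        funext i
        fin_cases i
        · exact hx
        · exact hp1
        · have : p 2 ^ 4 = 0 := by rw [hx] at e0; linear_combination e0
          exact pow_eq_zero_iff (by norm_num) |>.mp this
      have hz : p 2 ≠ 0 := by
        intro hz
        rw [hz] at e0
        have : p 0 ^ 4 = 0 := by linear_combination e0 / 5
        exact hx (pow_eq_zero_iff (by norm_num) |>.mp this)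
      have key2 : 2 * p 2 ^ 2 + β * p 0 ^ 2 = 0 := by
        have h' : 2 * p 0 * p 2 * (2 * p 2 ^ 2 + β * p 0 ^ 2) = 0 := by linear_combination e2
        rcases mul_eq_zero.mp h' with h'' | h''
        · exfalso
          rcases mul_eq_zero.mp h'' with h3 | h3
          · rcases mul_eq_zero.mp h3 with h4 | h4
            · exact two_ne_zero h4
            · exact hx h4
          · exact hz h3
        · exact h''
      have hfin : p 0 ^ 4 * (β ^ 2 - 4) = 0 := by
        linear_combination (-(4:K)/5) * e0 + ((2/5) * p 2 ^ 2 + β * p 0 ^ 2) * key2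
      rcases mul_eq_zero.mp hfin with h'' | h''
      · exact absurd (pow_eq_zero_iff (by norm_num) |>.mp h'') hx
      · linear_combination h''
    · intro hβ
      have hβ0 : β ≠ 0 := by rintro rfl; norm_num at hβ
      obtain ⟨z, hz⟩ := IsAlgClosed.exists_pow_nat_eq (-β / 2) (n := 2) (by norm_num)
      have hzne : z ≠ 0 := by
        rintro rfl
        rw [zero_pow (by norm_num)] at hz
        have : β = 0 := by linear_combination 2 * hz
        exact hβ0 this
      refine ⟨![1, 0, z], ?_, ?_⟩
      · intro h
        have : (1 : K) = 0 := congrFun h 0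
        exact one_ne_zero this
      · intro i
        fin_cases i
        · refine (h0 ![1, 0, z]).trans ?_
          simp only [Matrix.cons_val_zero, Matrix.cons_val_two, Matrix.tail_cons, Matrix.head_cons]
          linear_combination (z ^ 2 + 5 * β / 2) * hz - (5 / 4) * hβ
        · refine (h1 ![1, 0, z]).trans ?_
          simp
        · refine (h2 ![1, 0, z]).trans ?_
          simp only [Matrix.cons_val_zero, Matrix.cons_val_two, Matrix.tail_cons, Matrix.head_cons]
          linear_combination 4 * z * hz
  have h4 : β ^ 2 = 4 ↔ (β = 2 ∨ β = -2) := by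
    constructor
    · intro h
      have : (β - 2) * (β + 2) = 0 := by linear_combination h
      rcases mul_eq_zero.mp this with h' | h'
      · left; linear_combination h'
      · right; linear_combination h'
    · rintro (rfl | rfl) <;> norm_num
  exact ⟨by simp only [key, h4, not_or], key⟩
end

section
/- Let ξ be a primitive 16th root of unity in K. The substitution (X,Y,Z) ↦ (X, ξ Y, ξ^{12} Z) leaves the polynomial X^5 + Y^4 Z + X Z^4 invariant, and the class of diag(1, ξ, ξ^{12}) in PGL_3(K) has order exactly 16. -/
open MvPolynomial

/-- For ξ a primitive 16th root of unity, (X,Y,Z) ↦ (X, ξ Y, ξ^12 Z) leaves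
X^5 + Y^4 Z + X Z^4 invariant, and the class of diag(1, ξ, ξ^12) in PGL_3(K)
has order exactly 16. -/
theorem order_sixteen {K : Type*} [Field K] [IsAlgClosed K] [CharZero K]
    (ξ : K) (hξ : IsPrimitiveRoot ξ 16) :
    (aeval ![(X 0 : MvPolynomial (Fin 3) K), C ξ * X 1, C (ξ ^ 12) * X 2]
        (X 0 ^ 5 + X 1 ^ 4 * X 2 + X 0 * X 2 ^ 4 : MvPolynomial (Fin 3) K)
      = X 0 ^ 5 + X 1 ^ 4 * X 2 + X 0 * X 2 ^ 4) ∧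
    IsLeast {n : ℕ | 0 < n ∧ ∃ c : K,
      (Matrix.diagonal ![1, ξ, ξ ^ 12]) ^ n = c • (1 : Matrix (Fin 3) (Fin 3) K)} 16 := by
  have h16 : ξ ^ 16 = 1 := hξ.pow_eq_one
  constructor
  · simp only [map_add, map_mul, map_pow, aeval_X]
    simp only [Matrix.cons_val_zero, Matrix.cons_val_one, Matrix.head_cons,
      Matrix.cons_val_two, Matrix.tail_cons]
    ring_nf
    have h48 : (C ξ : MvPolynomial (Fin 3) K) ^ 48 = 1 := by
      rw [← map_pow, show ξ ^ 48 = (ξ ^ 16) ^ 3 by ring, h16]; simp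
    have hc16 : (C ξ : MvPolynomial (Fin 3) K) ^ 16 = 1 := by
      rw [← map_pow, h16]; simp
    rw [h48, hc16]
    ring
  constructor
  · refine ⟨by norm_num, 1, ?_⟩
    rw [Matrix.diagonal_pow, one_smul]
    have hv : (![1, ξ, ξ ^ 12] : Fin 3 → K) ^ 16 = 1 := by
      funext i
      have h192 : ξ ^ 192 = 1 := by
        rw [show (192 : ℕ) = 16 * 12 from rfl, pow_mul, h16, one_pow]
      fin_cases i
      · show (1 : K) ^ 16 = 1; simp
      · show ξ ^ 16 = 1; exact h16
      · show (ξ ^ 12) ^ 16 = 1; rw [← pow_mul]; exact h192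
    rw [hv]
    exact Matrix.diagonal_one
  · rintro n ⟨hn, c, hc⟩
    rw [Matrix.diagonal_pow] at hc
    have h0 := congrFun (congrFun hc 0) 0
    have h1 := congrFun (congrFun hc 1) 1
    simp [Matrix.diagonal, Matrix.smul_apply, Matrix.one_apply] at h0 h1
    have hξn : ξ ^ n = 1 := by rw [h1, ← h0]
    have := hξ.dvd_of_pow_eq_one n hξn
    exact Nat.le_of_dvd hn this
end
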